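/- arXiv:1508.01867 — 2 statements merged into one kernel-verified Lean document; each statement's English description precedes it below -/
import Mathlib

section
/- Let $\psi : [A, B] \to \mathbb{R}^+$ be integrable and set $K := \exp\left(\int_A^B \psi(t)\, dt\right)$. Let $u : [A, B] \to \mathbb{R}$ be twice differentiable (with absolutely continuous derivative) satisfying $|u''(t)| \leq \psi(t)\,(1 + |u'(t)|)$ for a.e. $t \in [A, B]$, and suppose $u'(\hat{t}) = 0$ for some $\hat{t} \in [A, B]$. Then $|u'(t)| \leq K$ for all $t \in [A, B]$. -/
open MeasureTheory Set intervalIntegral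

set_option maxHeartbeats 1000000

/-- Core estimate: on a subinterval where `w ≥ 0`, the variation of `log (1 + w)`
is bounded by the total integral of `ψ`. -/
lemma core_est (A B : ℝ) (hAB : A ≤ B) (ψ : ℝ → ℝ) (hψ : ∀ t ∈ Set.Icc A B, 0 ≤ ψ t)
    (hψint : IntervalIntegrable ψ MeasureTheory.volume A B)
    (w W : ℝ → ℝ)
    (hw : ∀ t ∈ Set.Icc A B, HasDerivAt w (W t) t)
    (hbd : ∀ᵐ t ∂(MeasureTheory.volume.restrict (Set.Icc A B)),
      |W t| ≤ ψ t * (1 + |w t|))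
    (a b : ℝ) (hab : a ≤ b) (hsub : Set.Icc a b ⊆ Set.Icc A B)
    (hnn : ∀ s ∈ Set.Icc a b, 0 ≤ w s) :
    |Real.log (1 + w b) - Real.log (1 + w a)| ≤ ∫ s in A..B, ψ s := by
  have hA : A ∈ Set.Icc A B := ⟨le_refl A, hAB⟩
  have haAB : a ∈ Set.Icc A B := hsub ⟨le_refl a, hab⟩
  have hbAB : b ∈ Set.Icc A B := hsub ⟨hab, le_refl b⟩
  have huIcc : Set.uIcc a b = Set.Icc a b := Set.uIcc_of_le hab
  have huIccAB : Set.uIcc A B = Set.Icc A B := Set.uIcc_of_le hAB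
  -- ψ is integrable on [a,b]
  have hψab : IntervalIntegrable ψ MeasureTheory.volume a b := by
    apply hψint.mono_set
    rw [huIcc, huIccAB]; exact hsub
  -- positivity of 1 + w on [a,b]
  have hpos : ∀ s ∈ Set.Icc a b, (0:ℝ) < 1 + w s := fun s hs => by
    have := hnn s hs; linarith
  -- the integrand
  set g : ℝ → ℝ := fun s => W s / (1 + w s) with hg
  -- measurability of g on restrict (uIoc a b)
  have hWae : W =ᵐ[MeasureTheory.volume.restrict (Set.uIoc a b)] deriv w := by
    filter_upwards [ae_restrict_mem measurableSet_uIoc] with s hs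
    have hs' : s ∈ Set.Icc a b := by
      rw [Set.uIoc_of_le hab] at hs; exact ⟨le_of_lt hs.1, hs.2⟩
    exact ((hw s (hsub hs')).deriv).symm
  have hWm : AEStronglyMeasurable W (MeasureTheory.volume.restrict (Set.uIoc a b)) :=
    (measurable_deriv w).aestronglyMeasurable.congr hWae.symm
  have hwc : ContinuousOn w (Set.Icc A B) :=
    fun s hs => (hw s hs).continuousAt.continuousWithinAt
  have huIocsub : Set.uIoc a b ⊆ Set.Icc A B := by
    rw [Set.uIoc_of_le hab]
    exact fun s hs => hsub ⟨le_of_lt hs.1, hs.2⟩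
  have hwm : AEStronglyMeasurable w (MeasureTheory.volume.restrict (Set.uIoc a b)) :=
    ContinuousOn.aestronglyMeasurable_of_isSeparable (hwc.mono huIocsub)
      measurableSet_uIoc (TopologicalSpace.IsSeparable.of_separableSpace _)
  have hgm : AEStronglyMeasurable g (MeasureTheory.volume.restrict (Set.uIoc a b)) := by
    have h1 : AEMeasurable W (MeasureTheory.volume.restrict (Set.uIoc a b)) :=
      (measurable_deriv w).aemeasurable.congr hWae.symm
    have h2 : AEMeasurable (fun s => 1 + w s) (MeasureTheory.volume.restrict (Set.uIoc a b)) :=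
      aemeasurable_const.add hwm.aemeasurable
    exact (h1.div h2).aestronglyMeasurable
  -- pointwise a.e. bound |g| ≤ ψ on uIoc a b
  have hbd' : ∀ᵐ s ∂(MeasureTheory.volume.restrict (Set.uIoc a b)),
      |W s| ≤ ψ s * (1 + |w s|) := by
    apply ae_restrict_of_ae_restrict_of_subset _ hbd
    rw [Set.uIoc_of_le hab]
    exact fun s hs => hsub ⟨le_of_lt hs.1, hs.2⟩
  have hgbd : ∀ᵐ s ∂(MeasureTheory.volume.restrict (Set.uIoc a b)),
      ‖g s‖ ≤ ψ s := by
    filter_upwards [hbd', ae_restrict_mem measurableSet_uIoc] with s h1 h2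
    have hs' : s ∈ Set.Icc a b := by
      rw [Set.uIoc_of_le hab] at h2; exact ⟨le_of_lt h2.1, h2.2⟩
    have h3 : (0:ℝ) < 1 + w s := hpos s hs'
    have h4 : |w s| = w s := abs_of_nonneg (hnn s hs')
    rw [Real.norm_eq_abs, hg]
    simp only [abs_div]
    rw [abs_of_pos h3, div_le_iff₀ h3]
    calc |W s| ≤ ψ s * (1 + |w s|) := h1
      _ = ψ s * (1 + w s) := by rw [h4]
  -- g is interval integrable on [a,b]
  have hgint : IntervalIntegrable g MeasureTheory.volume a b :=
    hψab.mono_fun' hgm hgbd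
  -- FTC
  have hFTC : ∫ s in a..b, g s = Real.log (1 + w b) - Real.log (1 + w a) := by
    apply intervalIntegral.integral_eq_sub_of_hasDerivAt
    · intro s hs
      rw [huIcc] at hs
      have h1 : HasDerivAt (fun x => 1 + w x) (W s) s := (hw s (hsub hs)).const_add 1
      exact h1.log (ne_of_gt (hpos s hs))
    · exact hgint
  -- |∫ g| ≤ ∫_a^b ψ
  have h5 : |∫ s in a..b, g s| ≤ ∫ s in a..b, ψ s := by
    calc |∫ s in a..b, g s| ≤ ∫ s in a..b, |g s| :=
          intervalIntegral.abs_integral_le_integral_abs hab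
      _ ≤ ∫ s in a..b, ψ s := by
          apply intervalIntegral.integral_mono_ae_restrict hab hgint.abs hψab
          have hbd2 : ∀ᵐ s ∂(MeasureTheory.volume.restrict (Set.Icc a b)),
              |W s| ≤ ψ s * (1 + |w s|) := ae_restrict_of_ae_restrict_of_subset hsub hbd
          filter_upwards [hbd2, ae_restrict_mem measurableSet_Icc] with s h1 h2
          have h3 : (0:ℝ) < 1 + w s := hpos s h2
          have h4 : |w s| = w s := abs_of_nonneg (hnn s h2)
          show |g s| ≤ ψ s
          rw [hg]
          simp only [abs_div]
          rw [abs_of_pos h3, div_le_iff₀ h3, ← h4]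
          exact h1
  -- ∫_a^b ψ ≤ ∫_A^B ψ
  have hψAa : IntervalIntegrable ψ MeasureTheory.volume A a := by
    apply hψint.mono_set; rw [huIccAB, Set.uIcc_of_le haAB.1]
    exact Set.Icc_subset_Icc (le_refl A) haAB.2
  have hψbB : IntervalIntegrable ψ MeasureTheory.volume b B := by
    apply hψint.mono_set; rw [huIccAB, Set.uIcc_of_le hbAB.2]
    exact Set.Icc_subset_Icc hbAB.1 (le_refl B)
  have h6 : ∫ s in a..b, ψ s ≤ ∫ s in A..B, ψ s := by
    have e1 : ∫ s in A..B, ψ s =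
        (∫ s in A..a, ψ s) + (∫ s in a..b, ψ s) + (∫ s in b..B, ψ s) := by
      rw [intervalIntegral.integral_add_adjacent_intervals hψAa hψab,
        intervalIntegral.integral_add_adjacent_intervals (hψAa.trans hψab) hψbB]
    have p1 : 0 ≤ ∫ s in A..a, ψ s := by
      apply intervalIntegral.integral_nonneg haAB.1
      intro s hs; exact hψ s ⟨hs.1, le_trans hs.2 haAB.2⟩
    have p2 : 0 ≤ ∫ s in b..B, ψ s := by
      apply intervalIntegral.integral_nonneg hbAB.2
      intro s hs; exact hψ s ⟨le_trans hbAB.1 hs.1, hs.2⟩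
    linarith
  rw [← hFTC]
  exact le_trans h5 h6

/-- Auxiliary lemma: if `w` vanishes somewhere on `[A,B]` then
`w t ≤ exp (∫ ψ) - 1` on `[A,B]`. -/
lemma aux_est (A B that : ℝ) (hAB : A ≤ B) (hthat : that ∈ Set.Icc A B)
    (ψ : ℝ → ℝ) (hψ : ∀ t ∈ Set.Icc A B, 0 ≤ ψ t)
    (hψint : IntervalIntegrable ψ MeasureTheory.volume A B)
    (w W : ℝ → ℝ)
    (hw : ∀ t ∈ Set.Icc A B, HasDerivAt w (W t) t)
    (hbd : ∀ᵐ t ∂(MeasureTheory.volume.restrict (Set.Icc A B)),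
      |W t| ≤ ψ t * (1 + |w t|))
    (h0 : w that = 0) (t : ℝ) (ht : t ∈ Set.Icc A B) :
    w t ≤ Real.exp (∫ s in A..B, ψ s) - 1 := by
  set K := Real.exp (∫ s in A..B, ψ s) with hK
  have hint_nonneg : 0 ≤ ∫ s in A..B, ψ s :=
    intervalIntegral.integral_nonneg hAB hψ
  have hK1 : (1:ℝ) ≤ K := by
    rw [hK, ← Real.exp_zero]; exact Real.exp_le_exp.2 hint_nonneg
  by_cases hwt : w t ≤ 0
  · linarith
  push_neg at hwt
  have hwc : ContinuousOn w (Set.Icc A B) :=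
    fun s hs => (hw s hs).continuousAt.continuousWithinAt
  rcases le_total that t with hta | hta
  · -- t is to the right of that
    set S := Set.Icc that t ∩ w ⁻¹' {0} with hS
    have hScl : IsClosed S :=
      (hwc.mono (Set.Icc_subset_Icc hthat.1 ht.2)).preimage_isClosed_of_isClosed
        isClosed_Icc isClosed_singleton
    have hSne : S.Nonempty := ⟨that, ⟨le_refl that, hta⟩, h0⟩
    have hSbdd : BddAbove S := bddAbove_Icc.mono Set.inter_subset_left
    set a := sSup S with ha
    have haS : a ∈ S := hScl.csSup_mem hSne hSbdd
    have hwa : w a = 0 := haS.2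
    have haIcc : a ∈ Set.Icc that t := haS.1
    have hat : a ≤ t := haIcc.2
    have haAB : Set.Icc a t ⊆ Set.Icc A B :=
      Set.Icc_subset_Icc (le_trans hthat.1 haIcc.1) ht.2
    have hnn : ∀ s ∈ Set.Icc a t, 0 ≤ w s := by
      intro s hs
      by_contra hneg
      push_neg at hneg
      have hst : s ≤ t := hs.2
      have : (0:ℝ) ∈ Set.Icc (w s) (w t) := ⟨le_of_lt hneg, le_of_lt hwt⟩
      obtain ⟨ξ, hξmem, hξ⟩ := intermediate_value_Icc hst
        (hwc.mono (Set.Icc_subset_Icc (le_trans (haAB ⟨le_refl a, hat⟩).1 hs.1) ht.2)) this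
      have hξS : ξ ∈ S := ⟨⟨le_trans haIcc.1 (le_trans hs.1 hξmem.1), hξmem.2⟩, hξ⟩
      have hξa : ξ ≤ a := le_csSup hSbdd hξS
      have : ξ = s := le_antisymm (le_trans hξa hs.1) hξmem.1
      rw [this] at hξ
      exact absurd hξ (ne_of_lt hneg)
    have hcore := core_est A B hAB ψ hψ hψint w W hw hbd a t hat haAB hnn
    rw [hwa] at hcore
    simp only [add_zero, Real.log_one, sub_zero] at hcore
    have h7 : Real.log (1 + w t) ≤ ∫ s in A..B, ψ s :=
      le_trans (le_abs_self _) hcore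
    have h8 : 1 + w t ≤ K := by
      rw [hK]
      exact (Real.log_le_iff_le_exp (by linarith)).1 h7
    linarith
  · -- t is to the left of that
    set S := Set.Icc t that ∩ w ⁻¹' {0} with hS
    have hScl : IsClosed S :=
      (hwc.mono (Set.Icc_subset_Icc ht.1 hthat.2)).preimage_isClosed_of_isClosed
        isClosed_Icc isClosed_singleton
    have hSne : S.Nonempty := ⟨that, ⟨hta, le_refl that⟩, h0⟩
    have hSbdd : BddBelow S := bddBelow_Icc.mono Set.inter_subset_left
    set a := sInf S with ha
    have haS : a ∈ S := hScl.csInf_mem hSne hSbdd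
    have hwa : w a = 0 := haS.2
    have haIcc : a ∈ Set.Icc t that := haS.1
    have hat : t ≤ a := haIcc.1
    have haAB : Set.Icc t a ⊆ Set.Icc A B :=
      Set.Icc_subset_Icc ht.1 (le_trans haIcc.2 hthat.2)
    have hnn : ∀ s ∈ Set.Icc t a, 0 ≤ w s := by
      intro s hs
      by_contra hneg
      push_neg at hneg
      have hst : t ≤ s := hs.1
      have : (0:ℝ) ∈ Set.Icc (w s) (w t) := ⟨le_of_lt hneg, le_of_lt hwt⟩
      obtain ⟨ξ, hξmem, hξ⟩ := intermediate_value_Icc' hst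
        (hwc.mono (Set.Icc_subset_Icc ht.1 (haAB ⟨hst, hs.2⟩).2)) this
      have hξS : ξ ∈ S := ⟨⟨hξmem.1, le_trans hξmem.2 (le_trans hs.2 haIcc.2)⟩, hξ⟩
      have hξa : a ≤ ξ := csInf_le hSbdd hξS
      have : ξ = s := le_antisymm hξmem.2 (le_trans hs.2 hξa)
      rw [this] at hξ
      exact absurd hξ (ne_of_lt hneg)
    have hcore := core_est A B hAB ψ hψ hψint w W hw hbd t a hat haAB hnn
    rw [hwa] at hcore
    simp only [add_zero, Real.log_one, zero_sub, abs_neg] at hcore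
    have h7 : Real.log (1 + w t) ≤ ∫ s in A..B, ψ s :=
      le_trans (le_abs_self _) hcore
    have h8 : 1 + w t ≤ K := by
      rw [hK]
      exact (Real.log_le_iff_le_exp (by linarith)).1 h7
    linarith

theorem stmt_8 (A B that : ℝ) (hAB : A ≤ B) (hthat : that ∈ Set.Icc A B)
    (ψ : ℝ → ℝ) (hψ : ∀ t ∈ Set.Icc A B, 0 ≤ ψ t)
    (hψint : IntervalIntegrable ψ MeasureTheory.volume A B)
    (u u' u'' : ℝ → ℝ)
    (hu : ∀ t ∈ Set.Icc A B, HasDerivAt u (u' t) t)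
    (hu' : ∀ t ∈ Set.Icc A B, HasDerivAt u' (u'' t) t)
    (hbd : ∀ᵐ t ∂(MeasureTheory.volume.restrict (Set.Icc A B)),
      |u'' t| ≤ ψ t * (1 + |u' t|))
    (h0 : u' that = 0) :
    ∀ t ∈ Set.Icc A B, |u' t| ≤ Real.exp (∫ s in A..B, ψ s) := by
  intro t ht
  have h1 : u' t ≤ Real.exp (∫ s in A..B, ψ s) - 1 :=
    aux_est A B that hAB hthat ψ hψ hψint u' u'' hu' hbd h0 t ht
  have hbd' : ∀ᵐ s ∂(MeasureTheory.volume.restrict (Set.Icc A B)),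
      |(fun x => -u'' x) s| ≤ ψ s * (1 + |(fun x => -u' x) s|) := by
    filter_upwards [hbd] with s hs
    simpa [abs_neg] using hs
  have h2 : -u' t ≤ Real.exp (∫ s in A..B, ψ s) - 1 :=
    aux_est A B that hAB hthat ψ hψ hψint (fun x => -u' x) (fun x => -u'' x)
      (fun s hs => (hu' s hs).neg) hbd' (by simp [h0]) t ht
  have hK1 : (0:ℝ) ≤ ∫ s in A..B, ψ s := intervalIntegral.integral_nonneg hAB hψ
  rw [abs_le]
  constructor <;> linarith
end

section
/- Let $a : \mathbb{R} \to \mathbb{R}$ be continuous, $T$-periodic with minimal period $T$, and sign-changing with only isolated zeros on a period. Let $g : \mathbb{R}^+ \to \mathbb{R}^+$ be continuous with $g(s) > 0$ for $s > 0$. If $u$ is a positive $kT$-periodic solution (for some integer $k \geq 2$) of $u'' + cu' + a(t)g(u) = 0$ which is not $\ell T$-periodic for any integer $1 \leq \ell \leq k-1$, and if the minimal period of $u$ is a rational multiple $pT/q$ of $T$ ($p, q$ coprime positive integers), then $u$ has minimal period exactly $kT$. -/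
theorem stmt_17 (c T : ℝ) (hT : 0 < T) (k : ℕ) (hk : 2 ≤ k)
    (a : ℝ → ℝ) (ha : Continuous a) (haper : Function.Periodic a T)
    (hamin : ∀ T', 0 < T' → Function.Periodic a T' → T ≤ T')
    (hsign : (∃ t₁ ∈ Set.Icc (0:ℝ) T, 0 < a t₁) ∧ ∃ t₂ ∈ Set.Icc (0:ℝ) T, a t₂ < 0)
    (hiso : ∀ t, a t = 0 → ∃ ε, 0 < ε ∧ ∀ s, |s - t| < ε → s ≠ t → a s ≠ 0)
    (g : ℝ → ℝ) (hg : ContinuousOn g (Set.Ici 0)) (hgpos : ∀ s, 0 < s → 0 < g s)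
    (u u' : ℝ → ℝ) (hupos : ∀ t, 0 < u t)
    (hu : ∀ t, HasDerivAt u (u' t) t)
    (hu' : ∀ t, HasDerivAt u' (-(c * u' t + a t * g (u t))) t)
    (hper : Function.Periodic u ((k : ℝ) * T))
    (hnot : ∀ ℓ : ℕ, 1 ≤ ℓ → ℓ ≤ k - 1 → ¬ Function.Periodic u ((ℓ : ℝ) * T))
    (p q : ℕ) (hp : 0 < p) (hq : 0 < q) (hpq : Nat.Coprime p q)
    (hmin : IsLeast {P : ℝ | 0 < P ∧ Function.Periodic u P} (((p : ℝ) * T) / q)) :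
    ((p : ℝ) * T) / q = (k : ℝ) * T := by
  set P : ℝ := ((p : ℝ) * T) / q with hPdef
  have hPpos : 0 < P := hmin.1.1
  have hP : Function.Periodic u P := hmin.1.2
  -- u' is P-periodic
  have hu'per : Function.Periodic u' P := by
    intro t
    have h1 : HasDerivAt (fun s => u (s + P)) (u' (t + P)) t :=
      HasDerivAt.comp_add_const t P (hu (t + P))
    have h2 : (fun s => u (s + P)) = u := funext fun s => hP s
    rw [h2] at h1
    exact h1.unique (hu t)
  -- a is P-periodic
  have haP : Function.Periodic a P := by
    intro t
    have h1 : HasDerivAt (fun s => u' (s + P)) (-(c * u' (t + P) + a (t + P) * g (u (t + P)))) t :=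
      HasDerivAt.comp_add_const t P (hu' (t + P))
    have h2 : (fun s => u' (s + P)) = u' := funext fun s => hu'per s
    rw [h2] at h1
    have h3 := h1.unique (hu' t)
    rw [hu'per t, hP t] at h3
    have h4 : a (t + P) * g (u t) = a t * g (u t) := by linarith
    have h5 : 0 < g (u t) := hgpos _ (hupos t)
    exact mul_right_cancel₀ (ne_of_gt h5) h4
  -- q = 1
  have hq1 : q = 1 := by
    have hmod : p % q = 0 := by
      by_contra hmod
      have hmodpos : 0 < p % q := Nat.pos_of_ne_zero hmod
      have hmodlt : p % q < q := Nat.mod_lt _ hq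
      have hrper : Function.Periodic a (P - (p / q : ℕ) * T) :=
        haP.sub_period (haper.nat_mul (p / q))
      have hreq : P - (p / q : ℕ) * T = ((p % q : ℕ) * T) / q := by
        rw [hPdef]
        have hq0 : (q : ℝ) ≠ 0 := Nat.cast_ne_zero.mpr hq.ne'
        field_simp
        have := Nat.div_add_mod p q
        have : ((q * (p / q) + p % q : ℕ) : ℝ) = (p : ℝ) := by rw [this]
        push_cast at this
        ring_nf
        nlinarith [this]
      rw [hreq] at hrper
      have hrpos : 0 < ((p % q : ℕ) * T) / q := by positivity
      have := hamin _ hrpos hrper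
      have hlt : ((p % q : ℕ) * T) / q < T := by
        rw [div_lt_iff₀ (by positivity)]
        have : ((p % q : ℕ) : ℝ) < (q : ℝ) := Nat.cast_lt.mpr hmodlt
        nlinarith
      linarith
    have hdvd : q ∣ p := Nat.dvd_of_mod_eq_zero hmod
    exact hpq.symm.eq_one_of_dvd hdvd
  -- now P = p * T
  have hPT : P = (p : ℝ) * T := by rw [hPdef, hq1]; simp
  -- p ∣ k
  have hpk : p ∣ k := by
    have hmod : k % p = 0 := by
      by_contra hmod
      have hmodpos : 0 < k % p := Nat.pos_of_ne_zero hmod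
      have hmodlt : k % p < p := Nat.mod_lt _ hp
      have hrper : Function.Periodic u (((k : ℝ) * T) - (k / p : ℕ) * P) :=
        hper.sub_period (hP.nat_mul (k / p))
      have hreq : ((k : ℝ) * T) - (k / p : ℕ) * P = ((k % p : ℕ) * T) := by
        rw [hPT]
        have := Nat.div_add_mod k p
        have : ((p * (k / p) + k % p : ℕ) : ℝ) = (k : ℝ) := by rw [this]
        push_cast at this
        nlinarith [this]
      rw [hreq] at hrper
      have hrpos : (0:ℝ) < (k % p : ℕ) * T := by positivity
      have hle := hmin.2 ⟨hrpos, hrper⟩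
      rw [hPT] at hle
      have : ((k % p : ℕ) : ℝ) < (p : ℝ) := Nat.cast_lt.mpr hmodlt
      nlinarith
    exact Nat.dvd_of_mod_eq_zero hmod
  have hple : p ≤ k := Nat.le_of_dvd (by omega) hpk
  have hpeq : p = k := by
    by_contra hne
    have hlt : p ≤ k - 1 := by omega
    exact hnot p hp hlt (hPT ▸ hP)
  rw [hPdef, hpeq, hq1]
  simp
end
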